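/- arXiv:2112.15519 — 7 statements merged into one kernel-verified Lean document; each statement's English description precedes it below -/
import Mathlib

section
/- Let X be a one-sided shift space over a finite alphabet such that the set of left special elements Sp_l(X) is finite and contains no periodic point of X. Then the set Sp_l(X̲) of left special elements of the associated two-sided shift X̲ is finite if and only if Sp_l(X) is finite; in particular, under the stated hypotheses Sp_l(X̲) is finite. -/
open Function Set

variable {A : Type*}

/-- The one-sided shift map. -/
def shiftMap (x : ℕ → A) : ℕ → A := fun n => x (n + 1)

/-- Prepend a finite word to a one-sided sequence. -/
def prependWord (μ : List A) (x : ℕ → A) : ℕ → A :=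
  fun n => if h : n < μ.length then μ.get ⟨n, h⟩ else x (n - μ.length)

/-- `PastSet X l x` is the set `P_l(x)` of words `μ` of length `l` with `μx ∈ X`. -/
def PastSet (X : Set (ℕ → A)) (l : ℕ) (x : ℕ → A) : Set (List A) :=
  {μ | μ.length = l ∧ prependWord μ x ∈ X}

/-- A point is left special if it has at least two shift-preimages in `X`. -/
def IsLeftSpecial (X : Set (ℕ → A)) (x : ℕ → A) : Prop :=
  x ∈ X ∧ ∃ y z, y ∈ X ∧ z ∈ X ∧ y ≠ z ∧ shiftMap y = x ∧ shiftMap z = x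

/-- The set of left special elements of `X`. -/
def SpL (X : Set (ℕ → A)) : Set (ℕ → A) := {x | IsLeftSpecial X x}

/-- A point is periodic if `σ^n x = x` for some `n ≥ 1`. -/
def IsPer (x : ℕ → A) : Prop := ∃ n ≥ 1, shiftMap^[n] x = x

/-- The language of `X`: finite words occurring as factors of points of `X`. -/
def Lang (X : Set (ℕ → A)) : Set (List A) :=
  {μ | ∃ x ∈ X, ∃ n : ℕ, ∀ i : Fin μ.length, x (n + i) = μ.get i}

/-- The two-sided shift space associated with `X` (inverse limit identification). -/
def twoSided (X : Set (ℕ → A)) : Set (ℤ → A) :=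
  {z | ∀ n : ℤ, (fun i : ℕ => z (n + i)) ∈ X}

/-- Left special elements of a two-sided shift space. -/
def SpLZ (Y : Set (ℤ → A)) : Set (ℤ → A) :=
  {z | z ∈ Y ∧ ∃ z' ∈ Y, z' (-1) ≠ z (-1) ∧ ∀ i : ℕ, z' i = z i}

/-- Right tail equivalence. -/
def Rte (x y : ℕ → A) : Prop := ∃ M M' : ℕ, shiftMap^[M] x = shiftMap^[M'] y

lemma shiftMap_iterate {A : Type*} (x : ℕ → A) (m : ℕ) :
    ∀ n, shiftMap^[m] x n = x (n + m) := by
  induction m with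
  | zero => intro n; simp
  | succ k ih =>
    intro n
    rw [Function.iterate_succ_apply']
    show (shiftMap^[k] x) (n + 1) = _
    rw [ih]
    congr 1
    omega

/-- if `Sp_l(X)` is finite with no periodic point, then `Sp_l(X̲)` is finite
iff `Sp_l(X)` is; in particular `Sp_l(X̲)` is finite. -/
theorem stmt2 [Finite A] [TopologicalSpace A] [DiscreteTopology A]
    (X : Set (ℕ → A)) (hne : X.Nonempty) (hcl : IsClosed X)
    (hseq : shiftMap '' X = X)
    (hfin : (SpL X).Finite) (hper : ∀ x ∈ SpL X, ¬ IsPer x) :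
    ((SpLZ (twoSided X)).Finite ↔ (SpL X).Finite) ∧ (SpLZ (twoSided X)).Finite := by
  classical
  have hrestr : ∀ z ∈ SpLZ (twoSided X), (fun i : ℕ => z (i : ℤ)) ∈ SpL X := by
    rintro z ⟨hz, z', hz', hne1, hag⟩
    refine ⟨?_, (fun i : ℕ => z (-1 + i)), (fun i : ℕ => z' (-1 + i)), hz (-1), hz' (-1),
      ?_, ?_, ?_⟩
    · have h0 := hz 0
      have : (fun i : ℕ => z ((0 : ℤ) + i)) = fun i : ℕ => z (i : ℤ) := by
        funext i; congr 1; omega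
      rwa [this] at h0
    · intro h
      have := congrFun h 0
      simp only [Nat.cast_zero, add_zero] at this
      exact hne1 this.symm
    · funext i
      show z (-1 + ((i + 1 : ℕ) : ℤ)) = z (i : ℤ)
      congr 1; push_cast; ring
    · funext i
      show z' (-1 + ((i + 1 : ℕ) : ℤ)) = z (i : ℤ)
      rw [show (-1 + ((i + 1 : ℕ) : ℤ)) = (i : ℤ) by push_cast; ring]
      exact hag i
  have key : ∀ x ∈ SpL X,
      {z : ℤ → A | z ∈ SpLZ (twoSided X) ∧ ∀ i : ℕ, z (i : ℤ) = x i}.Finite := by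
    intro x hx
    set D : Set ℕ := {m | ∃ y ∈ SpL X, shiftMap^[m] y = x} with hDdef
    have hDfin : D.Finite := by
      set f : ℕ → (ℕ → A) := fun m => if h : m ∈ D then h.choose else x with hf
      have hmem : ∀ m ∈ D, f m ∈ SpL X ∧ shiftMap^[m] (f m) = x := by
        intro m hm
        simp only [hf, dif_pos hm]
        exact ⟨hm.choose_spec.1, hm.choose_spec.2⟩
      have haux : ∀ a ∈ D, ∀ b ∈ D, a < b → f a = f b → False := by
        intro a ha b hb hab heq
        obtain ⟨hya, hsa⟩ := hmem a ha
        obtain ⟨hyb, hsb⟩ := hmem b hb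
        rw [heq] at hsa
        apply hper x hx
        refine ⟨b - a, by omega, ?_⟩
        calc shiftMap^[b - a] x = shiftMap^[b - a] (shiftMap^[a] (f b)) := by rw [hsa]
          _ = shiftMap^[b - a + a] (f b) := (Function.iterate_add_apply _ _ _ _).symm
          _ = shiftMap^[b] (f b) := by congr 1; omega
          _ = x := hsb
      have hinj : Set.InjOn f D := by
        intro a ha b hb heq
        rcases lt_trichotomy a b with h | h | h
        · exact absurd heq (fun heq => haux a ha b hb h heq)
        · exact h
        · exact absurd heq.symm (fun heq => haux b hb a ha h heq)
      have himg : (f '' D).Finite := hfin.subset (by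
        rintro _ ⟨m, hm, rfl⟩; exact (hmem m hm).1)
      exact Set.Finite.of_finite_image himg hinj
    obtain ⟨N, hN⟩ := hDfin.bddAbove
    set F : (ℤ → A) → (Fin (N + 1) → A) := fun z k => z (-(k : ℤ) - 1) with hF
    have hinj : Set.InjOn F {z : ℤ → A | z ∈ SpLZ (twoSided X) ∧ ∀ i : ℕ, z (i : ℤ) = x i} := by
      rintro z ⟨hzS, hzx⟩ w ⟨hwS, hwx⟩ heq
      by_contra hzw
      have hex : ∃ m : ℕ, z (-(m : ℤ) - 1) ≠ w (-(m : ℤ) - 1) := by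
        by_contra hall
        push_neg at hall
        apply hzw
        funext n
        rcases le_or_gt 0 n with hn | hn
        · have : n = ((n.toNat : ℕ) : ℤ) := by omega
          rw [this, hzx, hwx]
        · have : n = -(((-n - 1).toNat : ℕ) : ℤ) - 1 := by omega
          rw [this]; exact hall _
      set m₀ := Nat.find hex with hm₀def
      have hm₀ : z (-(m₀ : ℤ) - 1) ≠ w (-(m₀ : ℤ) - 1) := Nat.find_spec hex
      have hmin : ∀ k < m₀, z (-(k : ℤ) - 1) = w (-(k : ℤ) - 1) := by
        intro k hk
        by_contra hc
        exact Nat.find_min hex hk hc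
      -- show m₀ ∈ D
      have hzt := hzS.1
      have hwt := hwS.1
      set y : ℕ → A := fun i : ℕ => z ((i : ℤ) - m₀) with hy
      have hyD : m₀ ∈ D := by
        refine ⟨y, ⟨?_, (fun i : ℕ => z ((i : ℤ) - m₀ - 1)),
          (fun i : ℕ => w ((i : ℤ) - m₀ - 1)), ?_, ?_, ?_, ?_, ?_⟩, ?_⟩
        · have h := hzt (-(m₀ : ℤ))
          have : (fun i : ℕ => z (-(m₀ : ℤ) + i)) = y := by
            funext i; simp only [hy]; congr 1; ring
          rwa [this] at h
        · have h := hzt (-(m₀ : ℤ) - 1)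
          have : (fun i : ℕ => z (-(m₀ : ℤ) - 1 + i)) =
              fun i : ℕ => z ((i : ℤ) - m₀ - 1) := by
            funext i; congr 1; ring
          rwa [this] at h
        · have h := hwt (-(m₀ : ℤ) - 1)
          have : (fun i : ℕ => w (-(m₀ : ℤ) - 1 + i)) =
              fun i : ℕ => w ((i : ℤ) - m₀ - 1) := by
            funext i; congr 1; ring
          rwa [this] at h
        · intro h
          have := congrFun h 0
          simp only [Nat.cast_zero] at this
          apply hm₀
          have e : ((0 : ℤ) - m₀ - 1) = -(m₀ : ℤ) - 1 := by ring
          rw [e] at this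
          exact this
        · funext i
          show z (((i + 1 : ℕ) : ℤ) - m₀ - 1) = y i
          simp only [hy]; congr 1; push_cast; ring
        · funext i
          show w (((i + 1 : ℕ) : ℤ) - m₀ - 1) = y i
          simp only [hy]
          have e : (((i + 1 : ℕ) : ℤ) - m₀ - 1) = (i : ℤ) - m₀ := by push_cast; ring
          rw [e]
          rcases le_or_gt m₀ i with hi | hi
          · have e2 : ((i : ℤ) - m₀) = ((i - m₀ : ℕ) : ℤ) := by omega
            rw [e2, hzx, hwx]
          · have e2 : ((i : ℤ) - m₀) = -(((m₀ - i - 1 : ℕ)) : ℤ) - 1 := by omega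
            rw [e2]
            exact (hmin (m₀ - i - 1) (by omega)).symm
        · funext i
          rw [shiftMap_iterate]
          show z (((i + m₀ : ℕ) : ℤ) - m₀) = x i
          have e : (((i + m₀ : ℕ) : ℤ) - m₀) = (i : ℤ) := by push_cast; ring
          rw [e]; exact hzx i
      have hle : m₀ ≤ N := hN hyD
      have := congrFun heq ⟨m₀, by omega⟩
      simp only [hF] at this
      exact hm₀ this
    have himg : (F '' {z : ℤ → A | z ∈ SpLZ (twoSided X) ∧ ∀ i : ℕ, z (i : ℤ) = x i}).Finite :=
      Set.toFinite _
    exact Set.Finite.of_finite_image himg hinj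
  have main : (SpLZ (twoSided X)).Finite := by
    refine (hfin.biUnion key).subset ?_
    intro z hz
    exact Set.mem_biUnion (hrestr z hz) ⟨hz, fun i => rfl⟩
  exact ⟨⟨fun _ => hfin, fun _ => main⟩, main⟩
end

section
/- Let X be a one-sided shift space and x ∈ X a point having a unique past, i.e., #(σ^k)^{-1}({x}) = 1 for all k ≥ 1. Then for every l ≥ 1 there exists N ∈ ℕ such that whenever y ∈ X satisfies y_{[0,N]} = x_{[0,N]}, the set P_l(y) = {μ ∈ A^l : μy ∈ X} has exactly one element. -/
open Function Set

variable {A : Type*}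

lemma shift_iter_apply (k : ℕ) (w : ℕ → A) (n : ℕ) : shiftMap^[k] w n = w (n + k) := by
  induction k generalizing w with
  | zero => rfl
  | succ m ih =>
      rw [Function.iterate_succ_apply, ih]
      simp [shiftMap, Nat.add_assoc, Nat.add_comm 1 m]

lemma shift_iter_image (X : Set (ℕ → A)) (h : shiftMap '' X = X) :
    ∀ k, (shiftMap^[k]) '' X = X := by
  intro k; induction k with
  | zero => simp
  | succ n ih => rw [Function.iterate_succ', Set.image_comp, ih, h]

lemma shift_iter_prepend (μ : List A) (y : ℕ → A) :
    shiftMap^[μ.length] (prependWord μ y) = y := by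
  funext n
  rw [shift_iter_apply]
  simp [prependWord, Nat.add_sub_cancel]

lemma pastSet_nonempty (X : Set (ℕ → A)) (h : shiftMap '' X = X) (l : ℕ)
    (y : ℕ → A) (hy : y ∈ X) : ∃ μ, μ ∈ PastSet X l y := by
  have h2 := shift_iter_image X h l
  rw [← h2] at hy
  obtain ⟨w, hw, hwl⟩ := hy
  refine ⟨List.ofFn (fun i : Fin l => w i), by simp, ?_⟩
  have : prependWord (List.ofFn (fun i : Fin l => w i)) y = w := by
    funext n
    simp only [prependWord, List.length_ofFn]
    split_ifs with hn
    · simp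
    · rw [← hwl, shift_iter_apply, Nat.sub_add_cancel (Nat.le_of_not_lt hn)]
  rwa [this]

lemma prepend_ne (μ ν : List A) (y : ℕ → A) (hl : μ.length = ν.length) (h : μ ≠ ν) :
    prependWord μ y ≠ prependWord ν y := by
  intro he
  apply h
  apply List.ext_get hl
  intro i h1 h2
  have := congrFun he i
  simpa [prependWord, h1, h2] using this

/-- if `x` has a unique past then points agreeing with `x` on a long
enough prefix have a unique past of any prescribed length `l`. -/
theorem stmt3 [Finite A] [TopologicalSpace A] [DiscreteTopology A]
    (X : Set (ℕ → A)) (hne : X.Nonempty) (hcl : IsClosed X)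
    (hseq : shiftMap '' X = X)
    (x : ℕ → A) (hx : x ∈ X)
    (hup : ∀ k : ℕ, 1 ≤ k → ∃! y, y ∈ X ∧ shiftMap^[k] y = x) :
    ∀ l : ℕ, 1 ≤ l → ∃ N : ℕ, ∀ y ∈ X, (∀ i ≤ N, y i = x i) →
      ∃! μ, μ ∈ PastSet X l y := by
  intro l hl
  by_contra hcon
  push_neg at hcon
  -- for each N, get a witness y with two distinct past words
  have key : ∀ N : ℕ, ∃ y ∈ X, (∀ i ≤ N, y i = x i) ∧
      ∃ μ ν, μ ∈ PastSet X l y ∧ ν ∈ PastSet X l y ∧ μ ≠ ν := by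
    intro N
    obtain ⟨y, hyX, hyp, hnu⟩ := hcon N
    obtain ⟨μ, hμ⟩ := pastSet_nonempty X hseq l y hyX
    refine ⟨y, hyX, hyp, ?_⟩
    by_contra hno
    push_neg at hno
    exact hnu ⟨μ, hμ, fun ν hν => hno ν μ hν hμ⟩
  choose y hyX hyp μf νf hμf hνf hfne using key
  -- pigeonhole: infinitely many N share the same pair of words
  have hlen : ∀ N, (μf N).length = l := fun N => (hμf N).1
  have hlen' : ∀ N, (νf N).length = l := fun N => (hνf N).1
  let F : ℕ → (Fin l → A) × (Fin l → A) := fun N =>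
    (fun i => (μf N).get ⟨i, by rw [hlen]; exact i.2⟩,
     fun i => (νf N).get ⟨i, by rw [hlen']; exact i.2⟩)
  obtain ⟨b, hb⟩ := Finite.exists_infinite_fiber F
  have hbinf : (F ⁻¹' {b}).Infinite := Set.infinite_coe_iff.mp hb
  -- fixed words
  set μ0 : List A := List.ofFn b.1 with hμ0
  set ν0 : List A := List.ofFn b.2 with hν0
  have hfix : ∀ N ∈ F ⁻¹' {b}, μf N = μ0 ∧ νf N = ν0 := by
    intro N hN
    have hN' : F N = b := hN
    constructor
    · apply List.ext_get (by simp [hlen N, μ0])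
      intro i h1 h2
      have h3 : i < l := by rw [hlen N] at h1; exact h1
      have h4 := congrFun (congrArg Prod.fst hN') ⟨i, h3⟩
      simp only [F] at h4
      rw [List.get_ofFn]
      exact h4
    · apply List.ext_get (by simp [hlen' N, ν0])
      intro i h1 h2
      have h3 : i < l := by rw [hlen' N] at h1; exact h1
      have h4 := congrFun (congrArg Prod.snd hN') ⟨i, h3⟩
      simp only [F] at h4
      rw [List.get_ofFn]
      exact h4
  have hμν : μ0 ≠ ν0 := by
    obtain ⟨N, hN⟩ := hbinf.nonempty
    obtain ⟨e1, e2⟩ := hfix N hN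
    rw [← e1, ← e2]; exact hfne N
  have hμ0l : μ0.length = l := by simp [μ0]
  have hν0l : ν0.length = l := by simp [ν0]
  -- choose a sequence going to infinity inside the fiber
  have hgt : ∀ n : ℕ, ∃ m ∈ F ⁻¹' {b}, n < m := fun n => hbinf.exists_gt n
  choose g hg hgn using hgt
  -- limit argument
  have limmem : ∀ (ρ : List A), ρ.length = l → (∀ N ∈ F ⁻¹' {b}, prependWord ρ (y N) ∈ X) →
      prependWord ρ x ∈ X := by
    intro ρ hρl hρ
    have htend : Filter.Tendsto (fun n => prependWord ρ (y (g n))) Filter.atTop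
        (nhds (prependWord ρ x)) := by
      rw [tendsto_pi_nhds]
      intro m
      apply tendsto_nhds_of_eventually_eq
      filter_upwards [Filter.eventually_ge_atTop m] with n hn
      simp only [prependWord]
      split_ifs with hm
      · rfl
      · exact hyp (g n) (m - ρ.length) (le_trans (Nat.sub_le _ _) (le_trans hn (le_of_lt (hgn n))))
    exact hcl.mem_of_tendsto htend (Filter.Eventually.of_forall fun n => hρ (g n) (hg n))
  have hμx : prependWord μ0 x ∈ X := by
    apply limmem μ0 hμ0l
    intro N hN
    have := (hμf N).2
    rwa [(hfix N hN).1] at this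
  have hνx : prependWord ν0 x ∈ X := by
    apply limmem ν0 hν0l
    intro N hN
    have := (hνf N).2
    rwa [(hfix N hN).2] at this
  -- contradiction with unique past
  obtain ⟨w, -, hw⟩ := hup l hl
  have e1 : prependWord μ0 x = w := by
    apply hw
    exact ⟨hμx, by rw [← hμ0l]; exact shift_iter_prepend μ0 x⟩
  have e2 : prependWord ν0 x = w := by
    apply hw
    exact ⟨hνx, by rw [← hν0l]; exact shift_iter_prepend ν0 x⟩
  exact prepend_ne μ0 ν0 x (by rw [hμ0l, hν0l]) hμν (e1.trans e2.symm)
end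

section
/- Let X be a one-sided shift space such that Sp_l(X) is finite and contains no periodic point. Then every right tail equivalence class 𝔧 of left special elements contains a unique 𝔧-maximal element; moreover ω ∈ 𝔧 is 𝔧-maximal if and only if ω ∈ 𝔧 and σ^m(ω) is not left special for every m ≥ 1. -/
open Function Set

variable {A : Type*}

lemma rte_refl (x : ℕ → A) : Rte x x := ⟨0, 0, rfl⟩

lemma rte_symm {x y : ℕ → A} (h : Rte x y) : Rte y x := by
  obtain ⟨M, M', h⟩ := h; exact ⟨M', M, h.symm⟩

lemma rte_trans {x y z : ℕ → A} (h1 : Rte x y) (h2 : Rte y z) : Rte x z := by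
  obtain ⟨M, M', h1⟩ := h1
  obtain ⟨N, N', h2⟩ := h2
  refine ⟨N + M, M' + N', ?_⟩
  calc shiftMap^[N + M] x = shiftMap^[N] (shiftMap^[M] x) := Function.iterate_add_apply _ _ _ _
    _ = shiftMap^[N] (shiftMap^[M'] y) := by rw [h1]
    _ = shiftMap^[M'] (shiftMap^[N] y) := by
        rw [← Function.iterate_add_apply, ← Function.iterate_add_apply, Nat.add_comm]
    _ = shiftMap^[M'] (shiftMap^[N'] z) := by rw [h2]
    _ = shiftMap^[M' + N'] z := (Function.iterate_add_apply _ _ _ _).symm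

lemma rte_shift (x : ℕ → A) (m : ℕ) : Rte (shiftMap^[m] x) x := ⟨0, m, rfl⟩

lemma iter_mem {X : Set (ℕ → A)} (hX : ∀ u ∈ X, shiftMap u ∈ X) (m : ℕ) {x : ℕ → A}
    (hx : x ∈ X) : shiftMap^[m] x ∈ X := by
  induction m with
  | zero => exact hx
  | succ n ih => rw [Function.iterate_succ_apply']; exact hX _ ih

/-- Key lemma: a minimal common shift image of two rte points is either one of the two
points or is left special. -/
lemma key_lemma {X : Set (ℕ → A)} (hX : ∀ u ∈ X, shiftMap u ∈ X) {x y : ℕ → A}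
    (hx : x ∈ X) (hy : y ∈ X) (h : Rte x y) :
    ∃ M M', shiftMap^[M] x = shiftMap^[M'] y ∧
      (M' = 0 ∨ M = 0 ∨ shiftMap^[M] x ∈ SpL X) := by
  classical
  set P : ℕ → Prop := fun k => ∃ M M', M + M' = k ∧ shiftMap^[M] x = shiftMap^[M'] y with hP
  have hex : ∃ k, P k := by obtain ⟨M, M', h⟩ := h; exact ⟨M + M', M, M', rfl, h⟩
  obtain ⟨M, M', hsum, heq⟩ := Nat.find_spec hex
  refine ⟨M, M', heq, ?_⟩
  rcases Nat.eq_zero_or_pos M' with h0 | hM' ; · exact Or.inl h0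
  rcases Nat.eq_zero_or_pos M with h0 | hM ; · exact Or.inr (Or.inl h0)
  refine Or.inr (Or.inr ?_)
  obtain ⟨m, rfl⟩ : ∃ m, M = m + 1 := ⟨M - 1, by omega⟩
  obtain ⟨m', rfl⟩ : ∃ m', M' = m' + 1 := ⟨M' - 1, by omega⟩
  refine ⟨iter_mem hX _ hx, shiftMap^[m] x, shiftMap^[m'] y, iter_mem hX _ hx,
    iter_mem hX _ hy, ?_, (Function.iterate_succ_apply' _ _ _).symm, ?_⟩
  · intro hcon
    have : P (m + m') := ⟨m, m', rfl, hcon⟩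
    exact Nat.find_min hex (by omega) this
  · rw [heq]; exact (Function.iterate_succ_apply' _ _ _).symm

lemma exists_max_of_directed {α : Type*} {r : α → α → Prop}
    (htrans : ∀ {a b c}, r a b → r b c → r a c)
    {S : Set α} (hS : S.Finite) (hne : S.Nonempty)
    (hrefl : ∀ x ∈ S, r x x)
    (hdir : ∀ x ∈ S, ∀ y ∈ S, ∃ z ∈ S, r x z ∧ r y z) :
    ∃ z ∈ S, ∀ x ∈ S, r x z := by
  classical
  have main : ∀ t : Finset α, ↑t ⊆ S → ∃ z ∈ S, ∀ x ∈ t, r x z := by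
    intro t
    induction t using Finset.induction_on with
    | empty =>
      intro _
      obtain ⟨z, hz⟩ := hne
      exact ⟨z, hz, by simp⟩
    | @insert a t ha ih =>
      intro hsub
      have haS : a ∈ S := hsub (Finset.mem_insert_self a t)
      obtain ⟨z, hzS, hz⟩ := ih (fun x hx => hsub (Finset.mem_insert_of_mem hx))
      obtain ⟨w, hwS, haw, hzw⟩ := hdir a haS z hzS
      refine ⟨w, hwS, ?_⟩
      intro x hx
      rcases Finset.mem_insert.mp hx with rfl | hx
      · exact haw
      · exact htrans (hz x hx) hzw
  obtain ⟨z, hzS, hz⟩ := main hS.toFinset (by simp)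
  exact ⟨z, hzS, fun x hx => hz x (hS.mem_toFinset.mpr hx)⟩

/-- every right tail equivalence class of left special elements has a unique
maximal element, characterized by having no left special point in its strictly forward orbit. -/
theorem stmt4 [Finite A] [TopologicalSpace A] [DiscreteTopology A]
    (X : Set (ℕ → A)) (hne : X.Nonempty) (hcl : IsClosed X)
    (hseq : shiftMap '' X = X)
    (hfin : (SpL X).Finite) (hper : ∀ x ∈ SpL X, ¬ IsPer x) :
    ∀ ω₀ ∈ SpL X,
      (∃! ω, ω ∈ SpL X ∧ Rte ω ω₀ ∧
        ∀ ω' ∈ SpL X, Rte ω' ω₀ → ∃ m : ℕ, shiftMap^[m] ω' = ω) ∧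
      (∀ ω, (ω ∈ SpL X ∧ Rte ω ω₀ ∧
          ∀ ω' ∈ SpL X, Rte ω' ω₀ → ∃ m : ℕ, shiftMap^[m] ω' = ω) ↔
        (ω ∈ SpL X ∧ Rte ω ω₀ ∧ ∀ m : ℕ, 1 ≤ m → ¬ IsLeftSpecial X (shiftMap^[m] ω))) := by

  intro ω₀ hω₀
  classical
  have hX : ∀ u ∈ X, shiftMap u ∈ X := by
    intro u hu
    rw [← hseq]; exact ⟨u, hu, rfl⟩
  -- antisymmetry of the "shift to" relation on left special points
  have antisymm : ∀ x ∈ SpL X, ∀ (m n : ℕ) (y : ℕ → A),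
      shiftMap^[m] x = y → shiftMap^[n] y = x → y = x := by
    intro x hx m n y hm hn
    have hfix : shiftMap^[n + m] x = x := by
      rw [Function.iterate_add_apply, hm, hn]
    rcases Nat.eq_zero_or_pos (n + m) with h0 | hpos
    · have hm0 : m = 0 := by omega
      rw [hm0] at hm; exact hm.symm ▸ rfl
    · exact absurd ⟨n + m, hpos, hfix⟩ (hper x hx)
  set S : Set (ℕ → A) := {ω | ω ∈ SpL X ∧ Rte ω ω₀} with hS
  have hSfin : S.Finite := hfin.subset (fun x hx => hx.1)
  have hSne : S.Nonempty := ⟨ω₀, hω₀, rte_refl ω₀⟩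
  have hdir : ∀ x ∈ S, ∀ y ∈ S, ∃ z ∈ S,
      (∃ m : ℕ, shiftMap^[m] x = z) ∧ (∃ m : ℕ, shiftMap^[m] y = z) := by
    rintro x ⟨hxS, hxR⟩ y ⟨hyS, hyR⟩
    have hxy : Rte x y := rte_trans hxR (rte_symm hyR)
    obtain ⟨M, M', heq, hcase⟩ := key_lemma hX hxS.1 hyS.1 hxy
    rcases hcase with h0 | h0 | hsp
    · subst h0
      exact ⟨y, ⟨hyS, hyR⟩, ⟨M, heq⟩, ⟨0, rfl⟩⟩
    · subst h0
      exact ⟨x, ⟨hxS, hxR⟩, ⟨0, rfl⟩, ⟨M', heq.symm⟩⟩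
    · refine ⟨shiftMap^[M] x, ⟨hsp, rte_trans (rte_shift x M) hxR⟩, ⟨M, rfl⟩, ⟨M', heq.symm⟩⟩
  obtain ⟨z, ⟨hzS, hzR⟩, hzmax⟩ := exists_max_of_directed
    (r := fun a b => ∃ m : ℕ, shiftMap^[m] a = b)
    (fun {a b c} ⟨m, hm⟩ ⟨n, hn⟩ => ⟨n + m, by rw [Function.iterate_add_apply, hm, hn]⟩)
    hSfin hSne (fun x _ => ⟨0, rfl⟩) hdir
  have hzmax' : ∀ ω' ∈ SpL X, Rte ω' ω₀ → ∃ m : ℕ, shiftMap^[m] ω' = z :=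
    fun ω' h1 h2 => hzmax ω' ⟨h1, h2⟩
  -- the characterization: maximal ↔ no forward special point
  have char : ∀ ω, (ω ∈ SpL X ∧ Rte ω ω₀ ∧
      ∀ ω' ∈ SpL X, Rte ω' ω₀ → ∃ m : ℕ, shiftMap^[m] ω' = ω) ↔
      (ω ∈ SpL X ∧ Rte ω ω₀ ∧ ∀ m : ℕ, 1 ≤ m → ¬ IsLeftSpecial X (shiftMap^[m] ω)) := by
    intro ω
    constructor
    · rintro ⟨hωS, hωR, hmax⟩
      refine ⟨hωS, hωR, ?_⟩
      intro m hm hsp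
      have hR : Rte (shiftMap^[m] ω) ω₀ := rte_trans (rte_shift ω m) hωR
      obtain ⟨k, hk⟩ := hmax _ hsp hR
      have hfix : shiftMap^[k + m] ω = ω := by
        rw [Function.iterate_add_apply, hk]
      exact absurd ⟨k + m, by omega, hfix⟩ (hper ω hωS)
    · rintro ⟨hωS, hωR, hnosp⟩
      refine ⟨hωS, hωR, ?_⟩
      intro ω' hω'S hω'R
      have hxy : Rte ω' ω := rte_trans hω'R (rte_symm hωR)
      obtain ⟨M, M', heq, hcase⟩ := key_lemma hX hω'S.1 hωS.1 hxy
      rcases hcase with h0 | h0 | hsp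
      · subst h0; exact ⟨M, heq⟩
      · subst h0
        rcases Nat.eq_zero_or_pos M' with h1 | h1
        · subst h1; exact ⟨0, heq⟩
        · exact absurd (heq ▸ hω'S) (hnosp M' h1)
      · rcases Nat.eq_zero_or_pos M' with h1 | h1
        · subst h1; exact ⟨M, heq⟩
        · exact absurd (heq ▸ hsp) (hnosp M' h1)
    
  refine ⟨⟨z, ⟨hzS, hzR, hzmax'⟩, ?_⟩, char⟩
  rintro w ⟨hwS, hwR, hwmax⟩
  obtain ⟨m, hm⟩ := hwmax z hzS hzR
  obtain ⟨n, hn⟩ := hzmax' w hwS hwR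
  exact antisymm z hzS m n w hm hn
end

section
/- Let X be a one-sided shift space with Sp_l(X) finite and containing no periodic point. Then for every left special element ω there exists N ∈ ℕ such that for all l > n ≥ N, the point σ^n(ω) is isolated in l-past equivalence, i.e., P_l(σ^n(ω)) = P_l(y) implies y = σ^n(ω). -/
/-!
If `σ^n ω` and `y` have the same `l`-past with `l > n`, then every word of length at most `l`
that extends `σ^n ω` to the left also extends `y`. Taking the words `a ω₀ … ω_{n-1}` and
`b ω₀ … ω_{n-1}` for two distinct preimages `aω`, `bω` of `ω` shows that `ω₀ … ω_{n-1} y` is left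
special. It agrees with `ω` on its first `n` coordinates, and the finitely many left special
points are separated by their prefixes of some fixed length `N`; so for `n ≥ N` it equals `ω`,
whence `y = σ^n ω`.
-/

open Function Set Filter

variable {A : Type*}

theorem Set.Finite.eventually_forall_eq_of_forall_lt_eq {β : Type*} {S : Set (ℕ → β)}
    (hS : S.Finite) :
    ∀ᶠ N in atTop, ∀ x ∈ S, ∀ y ∈ S, (∀ i < N, x i = y i) → x = y := by
  have hpair : ∀ p : (ℕ → β) × (ℕ → β),
      ∀ᶠ N in atTop, (∀ i < N, p.1 i = p.2 i) → p.1 = p.2 := by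
    rintro ⟨x, y⟩
    by_cases hxy : x = y
    · exact Eventually.of_forall fun _ _ => hxy
    obtain ⟨i, hi⟩ := Function.ne_iff.mp hxy
    filter_upwards [eventually_gt_atTop i] with N hN hagree
    exact absurd (hagree i hN) hi
  filter_upwards [(eventually_all_finite (hS.prod hS)).2 fun p _ => hpair p]
    with N hN x hx y hy using hN (x, y) ⟨hx, hy⟩

section prependWord

theorem prependWord_apply_of_lt (μ : List A) (x : ℕ → A) {i : ℕ} (h : i < μ.length) :
    prependWord μ x i = μ[i] := dif_pos h

theorem prependWord_apply_of_le (μ : List A) (x : ℕ → A) {i : ℕ} (h : μ.length ≤ i) :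
    prependWord μ x i = x (i - μ.length) := dif_neg (by omega)

theorem prependWord_nil (x : ℕ → A) : prependWord [] x = x := by
  funext i
  simp [prependWord_apply_of_le]

theorem prependWord_append (κ μ : List A) (x : ℕ → A) :
    prependWord (κ ++ μ) x = prependWord κ (prependWord μ x) := by
  funext i
  by_cases h₁ : i < κ.length
  · rw [prependWord_apply_of_lt _ _ (by simp; omega), prependWord_apply_of_lt _ _ h₁,
      List.getElem_append_left h₁]
  rw [prependWord_apply_of_le κ _ (by omega)]
  by_cases h₂ : i < κ.length + μ.length
  · rw [prependWord_apply_of_lt _ _ (by simp; omega), prependWord_apply_of_lt _ _ (by omega),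
      List.getElem_append_right (by omega)]
  · rw [prependWord_apply_of_le _ _ (by simp; omega), prependWord_apply_of_le _ _ (by omega),
      List.length_append, Nat.sub_sub]

theorem shiftMap_iterate_apply (x : ℕ → A) (n i : ℕ) : shiftMap^[n] x i = x (i + n) := by
  induction n generalizing x with
  | zero => rfl
  | succ n ih =>
    rw [iterate_succ_apply, ih]
    simp only [shiftMap]
    congr 1

theorem shiftMap_iterate_prependWord (μ : List A) (x : ℕ → A) :
    shiftMap^[μ.length] (prependWord μ x) = x := by
  funext i
  rw [shiftMap_iterate_apply, prependWord_apply_of_le _ _ (by omega), Nat.add_sub_cancel]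

theorem shiftMap_prependWord_singleton (a : A) (x : ℕ → A) :
    shiftMap (prependWord [a] x) = x :=
  shiftMap_iterate_prependWord [a] x

theorem prependWord_singleton_shiftMap (x : ℕ → A) : prependWord [x 0] (shiftMap x) = x := by
  funext i
  cases i with
  | zero => rfl
  | succ i => rfl

theorem prependWord_ofFn_apply_of_lt {n : ℕ} (ω x : ℕ → A) {i : ℕ} (h : i < n) :
    prependWord (List.ofFn fun j : Fin n => ω j) x i = ω i := by
  rw [prependWord_apply_of_lt _ _ (by simpa using h), List.getElem_ofFn]

theorem prependWord_ofFn_shiftMap_iterate (n : ℕ) (ω : ℕ → A) :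
    prependWord (List.ofFn fun j : Fin n => ω j) (shiftMap^[n] ω) = ω := by
  funext i
  by_cases h : i < n
  · exact prependWord_ofFn_apply_of_lt ω _ h
  · rw [prependWord_apply_of_le _ _ (by simp; omega), shiftMap_iterate_apply, List.length_ofFn]
    congr 1
    omega

end prependWord

section ShiftSpace

variable {X : Set (ℕ → A)}

theorem exists_prependWord_mem (hX : X ⊆ shiftMap '' X) {x : ℕ → A} (hx : x ∈ X) (k : ℕ) :
    ∃ κ : List A, κ.length = k ∧ prependWord κ x ∈ X := by
  induction k with
  | zero => exact ⟨[], rfl, by rwa [prependWord_nil]⟩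
  | succ k ih =>
    obtain ⟨κ, hκ, hκX⟩ := ih
    obtain ⟨q, hq, hqκ⟩ := hX hκX
    refine ⟨[q 0] ++ κ, by simp [hκ], ?_⟩
    rwa [prependWord_append, ← hqκ, prependWord_singleton_shiftMap]

theorem prependWord_mem_of_append_mem (hX : MapsTo shiftMap X X) {κ μ : List A} {x : ℕ → A}
    (h : prependWord (κ ++ μ) x ∈ X) : prependWord μ x ∈ X := by
  rw [prependWord_append] at h
  simpa only [shiftMap_iterate_prependWord] using hX.iterate κ.length h

theorem prependWord_mem_of_pastSet_eq (hX : shiftMap '' X = X) {l : ℕ} {x y : ℕ → A}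
    (hP : PastSet X l x = PastSet X l y) {μ : List A} (hμ : μ.length ≤ l)
    (h : prependWord μ x ∈ X) : prependWord μ y ∈ X := by
  obtain ⟨κ, hκ, hκX⟩ := exists_prependWord_mem hX.superset h (l - μ.length)
  have hx : κ ++ μ ∈ PastSet X l x := ⟨by simp only [List.length_append]; omega,
    by rwa [prependWord_append]⟩
  rw [hP] at hx
  exact prependWord_mem_of_append_mem (mapsTo_iff_image_subset.2 hX.subset) hx.2

theorem isLeftSpecial_iff {x : ℕ → A} :
    IsLeftSpecial X x ↔
      x ∈ X ∧ ∃ a b : A, a ≠ b ∧ prependWord [a] x ∈ X ∧ prependWord [b] x ∈ X := by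
  constructor
  · rintro ⟨hx, y, z, hy, hz, hyz, rfl, hzy⟩
    refine ⟨hx, y 0, z 0, fun h => hyz ?_, by rwa [prependWord_singleton_shiftMap], ?_⟩
    · rw [← prependWord_singleton_shiftMap y, ← prependWord_singleton_shiftMap z, h, hzy]
    · rwa [← hzy, prependWord_singleton_shiftMap]
  · rintro ⟨hx, a, b, hab, ha, hb⟩
    refine ⟨hx, _, _, ha, hb, fun h => hab ?_, shiftMap_prependWord_singleton a x,
      shiftMap_prependWord_singleton b x⟩
    simpa [prependWord_apply_of_lt] using congrFun h 0

theorem IsLeftSpecial.prependWord_of_pastSet_eq (hX : shiftMap '' X = X) {l : ℕ}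
    {x y : ℕ → A} (hP : PastSet X l x = PastSet X l y) {μ : List A} (hμ : μ.length < l)
    (h : IsLeftSpecial X (prependWord μ x)) : IsLeftSpecial X (prependWord μ y) := by
  obtain ⟨hx, a, b, hab, ha, hb⟩ := isLeftSpecial_iff.1 h
  have transfer : ∀ c : A, prependWord [c] (prependWord μ x) ∈ X →
      prependWord [c] (prependWord μ y) ∈ X := fun c hc => by
    rw [← prependWord_append] at hc ⊢
    exact prependWord_mem_of_pastSet_eq hX hP (by simpa using hμ) hc
  exact isLeftSpecial_iff.2 ⟨prependWord_mem_of_pastSet_eq hX hP hμ.le hx, a, b, hab,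
    transfer a ha, transfer b hb⟩

end ShiftSpace

theorem stmt5_general
    (X : Set (ℕ → A))
    (hseq : shiftMap '' X = X)
    (hfin : (SpL X).Finite) :
    ∀ ω, IsLeftSpecial X ω → ∃ N : ℕ, ∀ l n : ℕ, N ≤ n → n < l →
      ∀ y ∈ X, PastSet X l (shiftMap^[n] ω) = PastSet X l y → y = shiftMap^[n] ω := by
  intro ω hω
  obtain ⟨N, hN⟩ := hfin.eventually_forall_eq_of_forall_lt_eq.exists
  refine ⟨N, fun l n hNn hnl y _ hP => ?_⟩
  set μ := List.ofFn fun j : Fin n => ω j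
  have hlen : μ.length = n := List.length_ofFn
  have hμω : prependWord μ (shiftMap^[n] ω) = ω := prependWord_ofFn_shiftMap_iterate n ω
  have hμy : IsLeftSpecial X (prependWord μ y) :=
    IsLeftSpecial.prependWord_of_pastSet_eq hseq hP (hlen ▸ hnl) (by rwa [hμω])
  have hμyω : prependWord μ y = ω := hN _ hμy _ hω fun i hi =>
    prependWord_ofFn_apply_of_lt ω y (by omega)
  rw [← hμyω, ← hlen, shiftMap_iterate_prependWord]

/-- forward iterates of left special points are eventually isolated
in `l`-past equivalence. -/
theorem stmt5 [Finite A] [TopologicalSpace A] [DiscreteTopology A]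
    (X : Set (ℕ → A)) (hne : X.Nonempty) (hcl : IsClosed X)
    (hseq : shiftMap '' X = X)
    (hfin : (SpL X).Finite) (hper : ∀ x ∈ SpL X, ¬ IsPer x) :
    ∀ ω, IsLeftSpecial X ω → ∃ N : ℕ, ∀ l n : ℕ, N ≤ n → n < l →
      ∀ y ∈ X, PastSet X l (shiftMap^[n] ω) = PastSet X l y → y = shiftMap^[n] ω :=
  stmt5_general X hseq hfin
end

section
/- Let X be a minimal infinite one-sided shift space with bounded complexity growth, i.e., there exists K > 0 with p_X(n+1) − p_X(n) ≤ K for all n ≥ 1, where p_X(n) is the number of words of length n in the language of X. Then the number of left special elements of X is at most K; in particular Sp_l(X) is finite. -/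
open Function Set

variable {A : Type*}

/-!
The prefixes of length `n` of finitely many distinct left special points are,
for `n` large, distinct left special words of length `n`. Since every word of the language
extends to the left, the words of length `n + 1` map onto those of length `n` by dropping
the first letter, and every left special word has at least two preimages; so there are at
most `p_X(n + 1) - p_X(n) ≤ K` left special words of length `n`.
-/

def prefixWord (x : ℕ → A) (n : ℕ) : List A := List.ofFn fun i : Fin n => x i

@[simp]
lemma length_prefixWord (x : ℕ → A) (n : ℕ) : (prefixWord x n).length = n := by
  simp [prefixWord]

lemma cons_prefixWord_shiftMap (y : ℕ → A) (n : ℕ) :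
    y 0 :: prefixWord (shiftMap y) n = prefixWord y (n + 1) := by
  simp [prefixWord, shiftMap, List.ofFn_succ]

lemma apply_eq_of_prefixWord_eq {x y : ℕ → A} {n : ℕ} (h : prefixWord x n = prefixWord y n)
    {i : ℕ} (hi : i < n) : x i = y i :=
  congrFun (List.ofFn_inj.1 h) ⟨i, hi⟩

lemma eventually_injOn_prefixWord {S : Set (ℕ → A)} (hS : S.Finite) :
    ∀ᶠ n in Filter.atTop, InjOn (prefixWord · n) S := by
  choose! separatingIndex hsep using fun p (hp : p ∈ S.offDiag) => Function.ne_iff.1 hp.2.2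
  obtain ⟨N, hN⟩ := (hS.offDiag.image separatingIndex).bddAbove
  refine Filter.eventually_atTop.2 ⟨N + 1, fun n hn x hx y hy hxy => ?_⟩
  by_contra hne
  have hle : separatingIndex (x, y) ≤ N := hN ⟨(x, y), ⟨hx, hy, hne⟩, rfl⟩
  exact hsep (x, y) ⟨hx, hy, hne⟩ (apply_eq_of_prefixWord_eq hxy (by omega))

section Language

variable {X : Set (ℕ → A)}

lemma prefixWord_mem_lang {x : ℕ → A} (hx : x ∈ X) (n : ℕ) : prefixWord x n ∈ Lang X :=
  ⟨x, hx, 0, fun i => by rw [List.get_eq_getElem]; simp [prefixWord]⟩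

lemma cons_mem_lang {y : ℕ → A} (hy : y ∈ X) {k : ℕ} {w : List A}
    (hw : ∀ i : Fin w.length, y (k + 1 + i) = w.get i) : y k :: w ∈ Lang X :=
  ⟨y, hy, k, Fin.cases (by simp) fun j => by simpa [add_assoc, add_comm 1] using hw j⟩

lemma exists_cons_mem_lang (hX : X ⊆ shiftMap '' X) {w : List A} (hw : w ∈ Lang X) :
    ∃ a, a :: w ∈ Lang X := by
  obtain ⟨x, hx, m, hocc⟩ := hw
  cases m with
  | zero =>
    obtain ⟨y, hy, rfl⟩ := hX hx
    exact ⟨y 0, cons_mem_lang hy fun i => by simpa [shiftMap, add_comm] using hocc i⟩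
  | succ m => exact ⟨x m, cons_mem_lang hx hocc⟩

def leftSpecialWords (X : Set (ℕ → A)) (n : ℕ) : Set (List A) :=
  {w | w ∈ Lang X ∧ w.length = n ∧ ∃ a b, a ≠ b ∧ a :: w ∈ Lang X ∧ b :: w ∈ Lang X}

lemma ncard_leftSpecialWords_le [Finite A] (hX : X ⊆ shiftMap '' X) (n : ℕ) :
    (leftSpecialWords X n).ncard ≤
      {μ ∈ Lang X | μ.length = n + 1}.ncard - {μ ∈ Lang X | μ.length = n}.ncard := by
  cases isEmpty_or_nonempty A
  · simp [leftSpecialWords]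
  set L : ℕ → Set (List A) := fun m => {μ ∈ Lang X | μ.length = m}
  choose! ext hext using fun w (hw : w ∈ Lang X) => exists_cons_mem_lang hX hw
  set extended := (fun w => ext w :: w) '' L n
  have hsub : extended ⊆ L (n + 1) := by
    rintro _ ⟨w, hw, rfl⟩
    exact ⟨hext w hw.1, by simp [hw.2]⟩
  have hcard : extended.ncard = (L n).ncard :=
    ncard_image_of_injective _ fun _ _ h => (List.cons_eq_cons.1 h).2
  have hspecial : leftSpecialWords X n ⊆ List.tail '' (L (n + 1) \ extended) := by
    rintro w ⟨hw, hlen, a, b, hab, ha, hb⟩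
    obtain ⟨c, hc, hcw⟩ : ∃ c, c ≠ ext w ∧ c :: w ∈ Lang X := by
      by_cases hae : a = ext w
      · exact ⟨b, hae ▸ hab.symm, hb⟩
      · exact ⟨a, hae, ha⟩
    refine ⟨c :: w, ⟨⟨hcw, by simp [hlen]⟩, ?_⟩, rfl⟩
    rintro ⟨w', -, hw'⟩
    obtain ⟨rfl, rfl⟩ := List.cons_eq_cons.1 hw'
    exact hc rfl
  have hfin : (L (n + 1)).Finite := (List.finite_length_eq A (n + 1)).subset fun _ h => h.2
  calc (leftSpecialWords X n).ncard
      ≤ (List.tail '' (L (n + 1) \ extended)).ncard :=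
        ncard_le_ncard hspecial (hfin.sdiff.image _)
    _ ≤ (L (n + 1) \ extended).ncard := ncard_image_le hfin.sdiff
    _ = (L (n + 1)).ncard - (L n).ncard := by rw [ncard_sdiff' hsub hfin, hcard]

lemma head_ne_of_shiftMap_eq {y z : ℕ → A} (hyz : y ≠ z) (h : shiftMap y = shiftMap z) :
    y 0 ≠ z 0 := fun h0 =>
  hyz <| funext fun k => Nat.casesOn k h0 fun m => congrFun h m

lemma prefixWord_mem_leftSpecialWords {x : ℕ → A} (hx : x ∈ SpL X) (n : ℕ) :
    prefixWord x n ∈ leftSpecialWords X n := by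
  obtain ⟨hxX, y, z, hy, hz, hyz, rfl, hzy⟩ := hx
  refine ⟨prefixWord_mem_lang hxX n, length_prefixWord _ n, y 0, z 0,
    head_ne_of_shiftMap_eq hyz hzy.symm, ?_, ?_⟩
  · rw [cons_prefixWord_shiftMap]
    exact prefixWord_mem_lang hy _
  · rw [← hzy, cons_prefixWord_shiftMap]
    exact prefixWord_mem_lang hz _

lemma ncard_le_of_subset_spL [Finite A] (hX : X ⊆ shiftMap '' X) {K : ℕ}
    (hcplx : ∀ n : ℕ, 1 ≤ n →
      {μ ∈ Lang X | μ.length = n + 1}.ncard - {μ ∈ Lang X | μ.length = n}.ncard ≤ K)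
    {S : Set (ℕ → A)} (hS : S ⊆ SpL X) (hfin : S.Finite) : S.ncard ≤ K := by
  obtain ⟨n, hn, hinj⟩ :=
    ((Filter.eventually_ge_atTop 1).and (eventually_injOn_prefixWord hfin)).exists
  have hmaps : MapsTo (prefixWord · n) S (leftSpecialWords X n) :=
    fun x hx => prefixWord_mem_leftSpecialWords (hS hx) n
  calc S.ncard ≤ (leftSpecialWords X n).ncard :=
        ncard_le_ncard_of_injOn _ hmaps hinj
          ((List.finite_length_eq A n).subset fun _ h => h.2.1)
    _ ≤ _ := ncard_leftSpecialWords_le hX n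
    _ ≤ K := hcplx n hn

end Language

theorem stmt7_general [Finite A]
    (X : Set (ℕ → A))
    (hseq : shiftMap '' X = X)
    (K : ℕ)
    (hcplx : ∀ n : ℕ, 1 ≤ n →
      {μ ∈ Lang X | μ.length = n + 1}.ncard - {μ ∈ Lang X | μ.length = n}.ncard ≤ K) :
    (SpL X).ncard ≤ K ∧ (SpL X).Finite := by
  have hX : X ⊆ shiftMap '' X := hseq.ge
  have hfin : (SpL X).Finite := by
    by_contra hinf
    obtain ⟨T, hT, -, hTcard⟩ := Set.Infinite.exists_subset_ncard_eq hinf (K + 1)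
    have := ncard_le_of_subset_spL hX hcplx hT (Set.finite_of_ncard_pos (by omega))
    omega
  exact ⟨ncard_le_of_subset_spL hX hcplx subset_rfl hfin, hfin⟩

/-- a minimal infinite shift with bounded complexity growth (bound `K`)
has at most `K` left special elements. -/
theorem stmt7 [Finite A] [TopologicalSpace A] [DiscreteTopology A]
    (X : Set (ℕ → A)) (hne : X.Nonempty) (hcl : IsClosed X)
    (hseq : shiftMap '' X = X) (hinf : X.Infinite)
    (hmin : ∀ x ∈ X, ∀ y ∈ X, y ∈ closure {z | ∃ n : ℕ, shiftMap^[n] x = z})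
    (K : ℕ) (hK : 0 < K)
    (hcplx : ∀ n : ℕ, 1 ≤ n →
      {μ ∈ Lang X | μ.length = n + 1}.ncard - {μ ∈ Lang X | μ.length = n}.ncard ≤ K) :
    (SpL X).ncard ≤ K ∧ (SpL X).Finite :=
  stmt7_general X hseq K hcplx
end

section
/- Let X be an infinite one-sided shift space over a finite alphabet with σ(X) = X, whose set Sp_l(X) of left special elements is finite and contains no periodic point. Then the number of right tail equivalence classes 𝔍_X = Sp_l(X)/∼_rte is finite and at least 1; equivalently, Sp_l(X) is nonempty. -/
open Function Set

variable {A : Type*}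

/-! If no point of `X` had two preimages, `σ` would be injective on the compact set `X`, so by
compactness coordinate `0` of a point would be a function of coordinates `1, …, N` for a fixed `N`.
Then, from length `N` on, erasing the first letter maps the length-`(n + 1)` prefixes of points of `X`
injectively to the length-`n` prefixes, so the number of prefixes of each length stays bounded, which
is impossible when `X` is infinite. -/

def prefixSet (X : Set (ℕ → A)) (n : ℕ) : Set (Fin n → A) :=
  (fun x (i : Fin n) => x i) '' X

lemma eventually_injOn_prefix {S : Set (ℕ → A)} (hS : S.Finite) :
    ∀ᶠ n in Filter.atTop, InjOn (fun x (i : Fin n) => x i) S := by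
  have hpair : ∀ p ∈ S ×ˢ S, ∀ᶠ n in Filter.atTop, p.1 ≠ p.2 → ∃ i < n, p.1 i ≠ p.2 i := by
    intro p _
    by_cases hp : p.1 = p.2
    · exact Filter.Eventually.of_forall fun _ h => absurd hp h
    · obtain ⟨i, hi⟩ := Function.ne_iff.1 hp
      filter_upwards [Filter.eventually_gt_atTop i] with n hn
      exact fun _ => ⟨i, hn, hi⟩
  filter_upwards [(Filter.eventually_all_finite (hS.prod hS)).2 hpair] with n hn
  intro x hx y hy hxy
  by_contra hne
  obtain ⟨i, hi, hxyi⟩ := hn (x, y) ⟨hx, hy⟩ hne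
  exact hxyi (congrFun hxy ⟨i, hi⟩)

lemma finite_of_eventually_ncard_prefixSet_le [Finite A] {X : Set (ℕ → A)} {C : ℕ}
    (h : ∀ᶠ n in Filter.atTop, (prefixSet X n).ncard ≤ C) : X.Finite := by
  by_contra hX
  obtain ⟨S, hSX, hS, hScard⟩ := Set.Infinite.exists_subset_ncard_eq hX (C + 1)
  obtain ⟨n, hinj, hn⟩ := ((eventually_injOn_prefix hS).and h).exists
  have : C + 1 ≤ C :=
    calc C + 1 = ((fun x (i : Fin n) => x i) '' S).ncard := by rw [hinj.ncard_image, hScard]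
      _ ≤ (prefixSet X n).ncard := Set.ncard_le_ncard (image_mono hSX) (Set.toFinite _)
      _ ≤ C := hn
  omega

lemma exists_window_of_injOn_shiftMap [Finite A] [TopologicalSpace A] [DiscreteTopology A]
    {X : Set (ℕ → A)} (hcl : IsClosed X) (hinj : InjOn shiftMap X) :
    ∃ N, ∀ y ∈ X, ∀ z ∈ X, (∀ i < N, y (i + 1) = z (i + 1)) → y 0 = z 0 := by
  set K : Set ((ℕ → A) × (ℕ → A)) := (X ×ˢ X) ∩ {p | p.1 0 ≠ p.2 0}
  set U : ℕ → Set ((ℕ → A) × (ℕ → A)) := fun N => ⋃ i < N, {p | p.1 (i + 1) ≠ p.2 (i + 1)}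
  have hK : IsCompact K := (hcl.isCompact.prod hcl.isCompact).inter_right
    ((isClosed_discrete {q : A × A | q.1 ≠ q.2}).preimage
      (f := fun p : (ℕ → A) × (ℕ → A) => (p.1 0, p.2 0)) (by fun_prop))
  have hU : ∀ N, IsOpen (U N) := fun N =>
    isOpen_biUnion fun i _ => isOpen_ne_fun (by fun_prop) (by fun_prop)
  have hcover : K ⊆ ⋃ N, U N := by
    rintro ⟨y, z⟩ ⟨⟨hy, hz⟩, h0⟩
    have hshift : shiftMap y ≠ shiftMap z := fun h => h0 (congrFun (hinj hy hz h) 0)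
    obtain ⟨i, hi⟩ := Function.ne_iff.1 hshift
    exact mem_iUnion.2 ⟨i + 1, mem_iUnion₂.2 ⟨i, Nat.lt_succ_self i, hi⟩⟩
  have hmono : Monotone U := fun M N hMN =>
    biUnion_subset_biUnion_left fun i (hi : i < M) => lt_of_lt_of_le hi hMN
  obtain ⟨N, hN⟩ := hK.elim_directed_cover U hU hcover hmono.directed_le
  refine ⟨N, fun y hy z hz hyz => by_contra fun h0 => ?_⟩
  obtain ⟨i, hi, hne⟩ := mem_iUnion₂.1 (hN (show (y, z) ∈ K from ⟨⟨hy, hz⟩, h0⟩))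
  exact hne (hyz i hi)

section Window

variable {X : Set (ℕ → A)} {N : ℕ} (hmaps : MapsTo shiftMap X X)
  (hN : ∀ y ∈ X, ∀ z ∈ X, (∀ i < N, y (i + 1) = z (i + 1)) → y 0 = z 0)
include hmaps hN

lemma ncard_prefixSet_succ_le [Finite A] {n : ℕ} (hn : N ≤ n) :
    (prefixSet X (n + 1)).ncard ≤ (prefixSet X n).ncard := by
  have hmaps_tail : MapsTo Fin.tail (prefixSet X (n + 1)) (prefixSet X n) := by
    rintro _ ⟨x, hx, rfl⟩
    exact ⟨shiftMap x, hmaps hx, rfl⟩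
  have hinj_tail : InjOn Fin.tail (prefixSet X (n + 1)) := by
    rintro _ ⟨x, hx, rfl⟩ _ ⟨x', hx', rfl⟩ htail
    have h0 : x 0 = x' 0 :=
      hN x hx x' hx' fun i hi => congrFun htail ⟨i, lt_of_lt_of_le hi hn⟩
    beta_reduce at htail ⊢
    rw [← Fin.cons_self_tail (fun i : Fin (n + 1) => x i),
      ← Fin.cons_self_tail (fun i : Fin (n + 1) => x' i), htail]
    exact congrArg₂ _ h0 rfl
  exact Set.ncard_le_ncard_of_injOn Fin.tail hmaps_tail hinj_tail (Set.toFinite _)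

lemma ncard_prefixSet_le [Finite A] {n : ℕ} (hn : N ≤ n) :
    (prefixSet X n).ncard ≤ (prefixSet X N).ncard := by
  induction n, hn using Nat.le_induction with
  | base => exact le_rfl
  | succ m hm ih => exact (ncard_prefixSet_succ_le hmaps hN hm).trans ih

end Window

lemma finite_of_injOn_shiftMap [Finite A] [TopologicalSpace A] [DiscreteTopology A]
    {X : Set (ℕ → A)} (hcl : IsClosed X) (hmaps : MapsTo shiftMap X X)
    (hinj : InjOn shiftMap X) : X.Finite := by
  obtain ⟨N, hN⟩ := exists_window_of_injOn_shiftMap hcl hinj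
  exact finite_of_eventually_ncard_prefixSet_le
    (Filter.eventually_atTop.2 ⟨N, fun _ => ncard_prefixSet_le hmaps hN⟩)

lemma spL_nonempty_of_not_injOn {X : Set (ℕ → A)} (hmaps : MapsTo shiftMap X X)
    (h : ¬ InjOn shiftMap X) : (SpL X).Nonempty := by
  simp only [InjOn, not_forall] at h
  obtain ⟨y, hy, z, hz, hyz, hne⟩ := h
  exact ⟨shiftMap y, hmaps hy, y, z, hy, hz, hne, rfl, hyz.symm⟩

theorem stmt15_general [Finite A] [TopologicalSpace A] [DiscreteTopology A]
    (X : Set (ℕ → A)) (hcl : IsClosed X)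
    (hseq : shiftMap '' X = X) (hinf : X.Infinite)
    (hfin : (SpL X).Finite) :
    (SpL X).Nonempty ∧
      Finite (Quot (fun a b : {x // x ∈ SpL X} => Rte a.1 b.1)) ∧
      Nonempty (Quot (fun a b : {x // x ∈ SpL X} => Rte a.1 b.1)) := by
  have hmaps : MapsTo shiftMap X X := mapsTo_iff_image_subset.2 hseq.subset
  obtain ⟨x, hx⟩ := spL_nonempty_of_not_injOn hmaps fun hinj =>
    hinf (finite_of_injOn_shiftMap hcl hmaps hinj)
  have : Finite {x // x ∈ SpL X} := hfin.to_subtype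
  exact ⟨⟨x, hx⟩, Quot.finite _, ⟨Quot.mk _ ⟨x, hx⟩⟩⟩

/-- for an infinite one-sided shift with `Sp_l(X)` finite and without
periodic points, `Sp_l(X)` is nonempty and has finitely many (at least one) right tail
equivalence classes. -/
theorem stmt15 [Finite A] [TopologicalSpace A] [DiscreteTopology A]
    (X : Set (ℕ → A)) (hne : X.Nonempty) (hcl : IsClosed X)
    (hseq : shiftMap '' X = X) (hinf : X.Infinite)
    (hfin : (SpL X).Finite) (hper : ∀ x ∈ SpL X, ¬ IsPer x) :
    (SpL X).Nonempty ∧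
      Finite (Quot (fun a b : {x // x ∈ SpL X} => Rte a.1 b.1)) ∧
      Nonempty (Quot (fun a b : {x // x ∈ SpL X} => Rte a.1 b.1)) :=
  stmt15_general X hcl hseq hinf hfin
end

section
/- Let X be a minimal one-sided shift space with finitely many left special elements, over the alphabet {0,1}, and let X̲ be the associated two-sided shift. Then the map π₊: Sp_l(X̲) → Sp_l(X), z ↦ z_{[0,∞)}, is surjective. -/
open Function Set

variable {A : Type*}

lemma shift_iter (n : ℕ) (y : ℕ → A) : shiftMap^[n] y = fun i => y (i + n) := by
  induction n generalizing y with
  | zero => rfl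
  | succ n ih =>
    rw [Function.iterate_succ_apply, ih]
    funext i
    simp [shiftMap, add_assoc]

lemma mem_of_iter {X : Set (ℕ → A)} (hseq : shiftMap '' X = X) (k : ℕ) {y : ℕ → A}
    (hy : y ∈ X) : shiftMap^[k] y ∈ X := by
  induction k with
  | zero => exact hy
  | succ k ih =>
    rw [Function.iterate_succ_apply']
    rw [← hseq]
    exact ⟨_, ih, rfl⟩

lemma exists_preimage {X : Set (ℕ → A)} (hseq : shiftMap '' X = X) (n : ℕ) :
    ∀ x ∈ X, ∃ y ∈ X, shiftMap^[n] y = x := by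
  induction n with
  | zero => exact fun x hx => ⟨x, hx, rfl⟩
  | succ n ih =>
    intro x hx
    have hx' : x ∈ shiftMap '' X := by rw [hseq]; exact hx
    obtain ⟨x', hx', hxx⟩ := hx'
    obtain ⟨y, hy, hyx⟩ := ih x' hx'
    exact ⟨y, hy, by rw [Function.iterate_succ_apply', hyx, hxx]⟩

lemma exists_ext {X : Set (ℕ → Bool)} (hcl : IsClosed X) (hseq : shiftMap '' X = X)
    {x : ℕ → Bool} (hx : x ∈ X) : ∃ ζ ∈ twoSided X, ∀ i : ℕ, ζ i = x i := by
  set V : ℕ → Set (ℤ → Bool) :=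
    fun n => {z | (fun i : ℕ => z (-(n : ℤ) + i)) ∈ X ∧ ∀ i : ℕ, z i = x i} with hV
  have hdec : ∀ n, V (n + 1) ⊆ V n := by
    intro n z hz
    refine ⟨?_, hz.2⟩
    have h1 : shiftMap (fun i : ℕ => z (-((n : ℤ) + 1) + i)) ∈ X := by
      rw [← hseq]; exact ⟨_, hz.1, rfl⟩
    have h2 : shiftMap (fun i : ℕ => z (-((n : ℤ) + 1) + i)) =
        (fun i : ℕ => z (-(n : ℤ) + i)) := by
      funext i
      simp only [shiftMap]
      congr 1
      push_cast
      ring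
    rw [h2] at h1
    exact h1
  have hnonempty : ∀ n, (V n).Nonempty := by
    intro n
    obtain ⟨y, hy, hyx⟩ := exists_preimage hseq n x hx
    refine ⟨fun k => if 0 ≤ k + n then y (k + n).toNat else false, ?_, ?_⟩
    · have : (fun i : ℕ => if (0:ℤ) ≤ (-(n:ℤ) + i) + n then y ((-(n:ℤ) + i) + n).toNat
          else false) = y := by
        funext i
        have h0 : (0:ℤ) ≤ (-(n:ℤ) + i) + n := by omega
        rw [if_pos h0]
        congr 1
        omega
      simpa [this] using hy
    · intro i
      have h0 : (0:ℤ) ≤ (i:ℤ) + n := by positivity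
      have ht : ((i:ℤ) + n).toNat = i + n := by omega
      simp only [if_pos h0, ht]
      have := congrFun hyx i
      rw [shift_iter] at this
      exact this
  have hclosed : ∀ n, IsClosed (V n) := by
    intro n
    have heq : V n = ((fun z : ℤ → Bool => (fun i : ℕ => z (-(n : ℤ) + i))) ⁻¹' X) ∩
        (⋂ i : ℕ, {z : ℤ → Bool | z i = x i}) := by
      ext z
      simp [hV, mem_iInter]
    rw [heq]
    have hc : Continuous (fun z : ℤ → Bool => (fun i : ℕ => z (-(n : ℤ) + i))) :=
      continuous_pi fun i : ℕ => continuous_apply (-(n : ℤ) + (i : ℤ))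
    exact (IsClosed.preimage hc hcl).inter (isClosed_iInter fun i =>
      isClosed_eq (continuous_apply _) continuous_const)
  have hcpt : IsCompact (V 0) := (hclosed 0).isCompact
  obtain ⟨z, hz⟩ := IsCompact.nonempty_iInter_of_sequence_nonempty_isCompact_isClosed
    V hdec hnonempty hcpt hclosed
  simp only [mem_iInter] at hz
  refine ⟨z, ?_, (hz 0).2⟩
  intro m
  set n : ℕ := m.natAbs with hn
  have hle : -(n : ℤ) ≤ m := by rw [hn]; omega
  have hmem := (hz n).1
  have h3 : shiftMap^[(m + (n : ℤ)).toNat] (fun i : ℕ => z (-(n : ℤ) + i)) =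
      (fun i : ℕ => z (m + i)) := by
    rw [shift_iter]
    funext i
    congr 1
    have : ((m + (n : ℤ)).toNat : ℤ) = m + n := Int.toNat_of_nonneg (by rw [hn]; omega)
    push_cast [this]
    ring
  have := mem_of_iter hseq ((m + (n : ℤ)).toNat) hmem
  rwa [h3] at this

/-- for a minimal shift over `{0,1}` with finitely many left special
elements, the map `z ↦ z_{[0,∞)}` from `Sp_l(X̲)` to `Sp_l(X)` is surjective. -/
theorem stmt17 (X : Set (ℕ → Bool)) (hne : X.Nonempty) (hcl : IsClosed X)
    (hseq : shiftMap '' X = X) (hinf : X.Infinite)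
    (hmin : ∀ x ∈ X, ∀ y ∈ X, y ∈ closure {z | ∃ n : ℕ, shiftMap^[n] x = z})
    (hfin : (SpL X).Finite) :
    ∀ x ∈ SpL X, ∃ z ∈ SpLZ (twoSided X), ∀ i : ℕ, z i = x i := by
  rintro x ⟨hx, y, y', hy, hy', hne', hyx, hy'x⟩
  obtain ⟨ζ, hζ, hζy⟩ := exists_ext hcl hseq hy
  obtain ⟨ζ', hζ', hζy'⟩ := exists_ext hcl hseq hy'
  have hy0 : y 0 ≠ y' 0 := by
    intro h0
    apply hne'
    funext n
    cases n with
    | zero => exact h0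
    | succ n =>
      have := congrFun hyx n
      have h2 := congrFun hy'x n
      simp only [shiftMap] at this h2
      rw [this, h2]
  refine ⟨fun n => ζ (n + 1), ⟨?_, fun n => ζ' (n + 1), ?_, ?_, ?_⟩, ?_⟩
  · intro n
    have := hζ (n + 1)
    convert this using 2 with i
    ring
  · intro n
    have := hζ' (n + 1)
    convert this using 2 with i
    ring
  · show ζ' (-1 + 1) ≠ ζ (-1 + 1)
    norm_num
    have h1 : ζ (0 : ℤ) = y 0 := by simpa using hζy 0
    have h2 : ζ' (0 : ℤ) = y' 0 := by simpa using hζy' 0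
    rw [h1, h2]
    exact fun h => hy0 h.symm
  · intro i
    have h1 : ζ ((i : ℤ) + 1) = y (i + 1) := by
      have := hζy (i + 1); push_cast at this ⊢; exact this
    have h2 : ζ' ((i : ℤ) + 1) = y' (i + 1) := by
      have := hζy' (i + 1); push_cast at this ⊢; exact this
    show ζ' ((i : ℤ) + 1) = ζ ((i : ℤ) + 1)
    rw [h1, h2]
    have ha := congrFun hyx i
    have hb := congrFun hy'x i
    simp only [shiftMap] at ha hb
    rw [ha, hb]
  · intro i
    show ζ ((i : ℤ) + 1) = x i
    have h1 : ζ ((i : ℤ) + 1) = y (i + 1) := by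
      have := hζy (i + 1); push_cast at this ⊢; exact this
    rw [h1]
    have := congrFun hyx i
    simpa [shiftMap] using this
end
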